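/- arXiv:2201.02290 — 5 statements merged into one kernel-verified Lean document; each statement's English description precedes it below -/
import Mathlib

section
/- Under the linear price function π^ω[t](x) = π_0^ω[t] − a^ω[t]·∑_{j} (p_j^{dis,ω}[t] − p_j^{ch,ω}[t]) with a^ω[t] ≥ 0, each investor i's profit function f_i(x_i, x_{-i}) is a concave function of his own decision vector x_i for any fixed decisions x_{-i} of the other investors. -/
private lemma concaveOn_finsetSum {E ι : Type*} [AddCommMonoid E] [Module ℝ E]
    (s : Finset ι) (f : ι → E → ℝ) (h : ∀ i ∈ s, ConcaveOn ℝ Set.univ (f i)) :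
    ConcaveOn ℝ Set.univ (fun x => ∑ i ∈ s, f i x) := by
  classical
  induction s using Finset.cons_induction with
  | empty => simpa using concaveOn_const (0 : ℝ) convex_univ
  | cons i s hi ih =>
      simp only [Finset.sum_cons]
      exact (h i (Finset.mem_cons_self i s)).add
        (ih fun j hj => h j (Finset.mem_cons_of_mem hj))

private lemma convexOn_finsetSum {E ι : Type*} [AddCommMonoid E] [Module ℝ E]
    (s : Finset ι) (f : ι → E → ℝ) (h : ∀ i ∈ s, ConvexOn ℝ Set.univ (f i)) :
    ConvexOn ℝ Set.univ (fun x => ∑ i ∈ s, f i x) := by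
  classical
  induction s using Finset.cons_induction with
  | empty => simpa using convexOn_const (0 : ℝ) convex_univ
  | cons i s hi ih =>
      simp only [Finset.sum_cons]
      exact (h i (Finset.mem_cons_self i s)).add
        (ih fun j hj => h j (Finset.mem_cons_of_mem hj))

/-- Under the linear price function
`π^ω[t](x) = π₀^ω[t] − a^ω[t] · ∑_j (p_j^dis,ω[t] − p_j^ch,ω[t])` with `a^ω[t] ≥ 0`,
each investor's profit is a concave function of his own decision vector
`x_i = (S, P, pch, pdis)`, for any fixed decisions of the other investors
(summarized by their fixed net discharge `Qo ω t`). -/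
theorem investor_profit_concave_in_own_decision
    {Ω : Type*} [Fintype Ω] (T : ℕ)
    (ρ : Ω → ℝ) (π0 a : Ω → ℕ → ℝ) (Qo : Ω → ℕ → ℝ)
    (κ cS cP cch cdis : ℝ)
    (hρ : ∀ ω, 0 ≤ ρ ω) (hρ1 : ∑ ω, ρ ω = 1)
    (ha : ∀ ω t, 0 ≤ a ω t)
    (hκ : 0 ≤ κ) (hcS : 0 ≤ cS) (hcP : 0 ≤ cP) (hcch : 0 ≤ cch) (hcdis : 0 ≤ cdis) :
    ConcaveOn ℝ Set.univ
      (fun x : ℝ × ℝ × (Ω → ℕ → ℝ) × (Ω → ℕ → ℝ) =>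
        -- expected arbitrage revenue under the price impacted by all investors
        (∑ ω, ρ ω * ∑ t ∈ Finset.Icc 1 T,
          (x.2.2.2 ω t - x.2.2.1 ω t) *
            (π0 ω t - a ω t * ((x.2.2.2 ω t - x.2.2.1 ω t) + Qo ω t)))
        -- investment cost
        - (κ * cS * x.1 + κ * cP * x.2.1)
        -- operation cost
        - ∑ ω, ρ ω * ∑ t ∈ Finset.Icc 1 T,
            (cch * x.2.2.1 ω t + cdis * x.2.2.2 ω t)) := by
  have hRev : ConcaveOn ℝ Set.univ
      (fun x : ℝ × ℝ × (Ω → ℕ → ℝ) × (Ω → ℕ → ℝ) =>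
        ∑ ω, ρ ω * ∑ t ∈ Finset.Icc 1 T,
          (x.2.2.2 ω t - x.2.2.1 ω t) *
            (π0 ω t - a ω t * ((x.2.2.2 ω t - x.2.2.1 ω t) + Qo ω t))) := by
    apply concaveOn_finsetSum
    intro ω _
    have h1 : ConcaveOn ℝ Set.univ
        (fun x : ℝ × ℝ × (Ω → ℕ → ℝ) × (Ω → ℕ → ℝ) =>
          ∑ t ∈ Finset.Icc 1 T,
            (x.2.2.2 ω t - x.2.2.1 ω t) *
              (π0 ω t - a ω t * ((x.2.2.2 ω t - x.2.2.1 ω t) + Qo ω t))) := by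
      apply concaveOn_finsetSum
      intro t _
      refine ⟨convex_univ, fun x _ y _ u v hu hv huv => ?_⟩
      simp only [Prod.smul_snd, Prod.snd_add, Prod.smul_fst, Prod.fst_add, Pi.add_apply, Pi.smul_apply, smul_eq_mul]
      have hq := sq_nonneg ((x.2.2.2 ω t - x.2.2.1 ω t) - (y.2.2.2 ω t - y.2.2.1 ω t))
      have hv' : v = 1 - u := by linarith
      subst hv'
      nlinarith [mul_nonneg (mul_nonneg (ha ω t) (mul_nonneg hu hv)) hq]
    exact h1.smul (hρ ω)
  have hInv : ConvexOn ℝ Set.univ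
      (fun x : ℝ × ℝ × (Ω → ℕ → ℝ) × (Ω → ℕ → ℝ) => κ * cS * x.1 + κ * cP * x.2.1) := by
    refine ⟨convex_univ, fun x _ y _ u v hu hv huv => ?_⟩
    simp only [Prod.smul_fst, Prod.fst_add, Prod.smul_snd, Prod.snd_add, smul_eq_mul]
    apply le_of_eq; ring
  have hOp : ConvexOn ℝ Set.univ
      (fun x : ℝ × ℝ × (Ω → ℕ → ℝ) × (Ω → ℕ → ℝ) =>
        ∑ ω, ρ ω * ∑ t ∈ Finset.Icc 1 T,
          (cch * x.2.2.1 ω t + cdis * x.2.2.2 ω t)) := by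
    apply convexOn_finsetSum
    intro ω _
    have h1 : ConvexOn ℝ Set.univ
        (fun x : ℝ × ℝ × (Ω → ℕ → ℝ) × (Ω → ℕ → ℝ) =>
          ∑ t ∈ Finset.Icc 1 T, (cch * x.2.2.1 ω t + cdis * x.2.2.2 ω t)) := by
      apply convexOn_finsetSum
      intro t _
      refine ⟨convex_univ, fun x _ y _ u v hu hv huv => ?_⟩
      simp only [Prod.smul_snd, Prod.snd_add, Prod.smul_fst, Prod.fst_add, Pi.add_apply, Pi.smul_apply, smul_eq_mul]
      apply le_of_eq; ring
    exact h1.smul (hρ ω)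
  exact (hRev.sub hInv).sub hOp
end

section
/- The storage-investment game G with linear price function is an exact potential game: the function Φ(x) = ∑_i f_i(x) + E_ω[∑_t ∑_{1≤i<j≤I} a^ω[t]·(p_i^{dis,ω}[t]−p_i^{ch,ω}[t])(p_j^{dis,ω}[t]−p_j^{ch,ω}[t])] satisfies Φ(x_i, x_{-i}) − Φ(x_i', x_{-i}) = f_i(x_i, x_{-i}) − f_i(x_i', x_{-i}) for every investor i, every pair of strategies x_i, x_i' ∈ X_i, and every x_{-i}. -/
/-- Decision vector of one investor: `(S, P, pch, pdis, e)`. -/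
abbrev StorageDec (Ω : Type*) : Type _ :=
  ℝ × ℝ × (Ω → ℕ → ℝ) × (Ω → ℕ → ℝ) × (Ω → ℕ → ℝ)

/-- Net discharge `q_i^ω[t] = p_i^dis,ω[t] − p_i^ch,ω[t]`. -/
def netDis {Ω : Type*} (x : StorageDec Ω) (ω : Ω) (t : ℕ) : ℝ :=
  x.2.2.2.1 ω t - x.2.2.1 ω t

/-- Investor `i`'s payoff: expected arbitrage revenue under the linear price
`π₀ − a · ∑_j q_j`, minus investment and operation costs. -/
noncomputable def payoff {I : ℕ} {Ω : Type*} [Fintype Ω] (T : ℕ)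
    (ρ : Ω → ℝ) (π0 a : Ω → ℕ → ℝ) (κ : ℝ) (cS cP cch cdis : Fin I → ℝ)
    (i : Fin I) (x : Fin I → StorageDec Ω) : ℝ :=
  (∑ ω, ρ ω * ∑ t ∈ Finset.Icc 1 T,
      netDis (x i) ω t * (π0 ω t - a ω t * ∑ j, netDis (x j) ω t))
  - (κ * cS i * (x i).1 + κ * cP i * (x i).2.1)
  - ∑ ω, ρ ω * ∑ t ∈ Finset.Icc 1 T,
      (cch i * (x i).2.2.1 ω t + cdis i * (x i).2.2.2.1 ω t)

/-- The candidate potential function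
`Φ(x) = ∑_i f_i(x) + E_ω[∑_t ∑_{i<j} a^ω[t] q_i^ω[t] q_j^ω[t]]`. -/
noncomputable def potential {I : ℕ} {Ω : Type*} [Fintype Ω] (T : ℕ)
    (ρ : Ω → ℝ) (π0 a : Ω → ℕ → ℝ) (κ : ℝ) (cS cP cch cdis : Fin I → ℝ)
    (x : Fin I → StorageDec Ω) : ℝ :=
  (∑ i, payoff T ρ π0 a κ cS cP cch cdis i x) +
  ∑ ω, ρ ω * ∑ t ∈ Finset.Icc 1 T,
    ∑ p ∈ Finset.univ.filter (fun p : Fin I × Fin I => p.1 < p.2),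
      a ω t * (netDis (x p.1) ω t * netDis (x p.2) ω t)

lemma two_mul_pairsum {I : ℕ} (u : Fin I → ℝ) :
    2 * ∑ p ∈ Finset.univ.filter (fun p : Fin I × Fin I => p.1 < p.2), u p.1 * u p.2
      = (∑ j, u j) ^ 2 - ∑ j, (u j) ^ 2 := by
  have hswap : ∑ p ∈ Finset.univ.filter (fun p : Fin I × Fin I => p.2 < p.1), u p.1 * u p.2
      = ∑ p ∈ Finset.univ.filter (fun p : Fin I × Fin I => p.1 < p.2), u p.1 * u p.2 := by
    refine Finset.sum_nbij' (fun p => Prod.swap p) (fun p => Prod.swap p) ?_ ?_ ?_ ?_ ?_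
    · intro p hp; simp at hp ⊢; exact hp
    · intro p hp; simp at hp ⊢; exact hp
    · intro p _; simp
    · intro p _; simp
    · intro p _; simp [mul_comm]
  have hsq : (∑ j, u j) ^ 2 = ∑ p : Fin I × Fin I, u p.1 * u p.2 := by
    rw [sq, Finset.sum_mul_sum, ← Finset.sum_product']
    rfl
  have hsplit := Finset.sum_filter_add_sum_filter_not Finset.univ
    (fun p : Fin I × Fin I => p.1 < p.2) (fun p => u p.1 * u p.2)
  have hsplit2 := Finset.sum_filter_add_sum_filter_not
    (Finset.univ.filter (fun p : Fin I × Fin I => ¬ p.1 < p.2))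
    (fun p : Fin I × Fin I => p.2 < p.1) (fun p => u p.1 * u p.2)
  have hdiag : ∑ p ∈ (Finset.univ.filter (fun p : Fin I × Fin I => ¬ p.1 < p.2)).filter
      (fun p : Fin I × Fin I => ¬ p.2 < p.1), u p.1 * u p.2 = ∑ j, (u j) ^ 2 := by
    rw [Finset.filter_filter]
    refine Finset.sum_nbij' (fun p => p.1) (fun j => (j, j)) ?_ ?_ ?_ ?_ ?_
    · intro p hp; simp
    · intro j hj; simp
    · intro p hp; simp at hp; have : p.1 = p.2 := le_antisymm hp.2 hp.1
      ext <;> simp [this]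
    · intro j hj; rfl
    · intro p hp; simp at hp; have : p.1 = p.2 := le_antisymm hp.2 hp.1
      simp [← this, sq]
  have hlt : (Finset.univ.filter (fun p : Fin I × Fin I => ¬ p.1 < p.2)).filter
      (fun p : Fin I × Fin I => p.2 < p.1)
      = Finset.univ.filter (fun p : Fin I × Fin I => p.2 < p.1) := by
    rw [Finset.filter_filter]
    apply Finset.filter_congr
    intro p _
    constructor
    · rintro ⟨_, h⟩; exact h
    · intro h; exact ⟨not_lt.2 h.le, h⟩
  rw [hsq, ← hsplit, ← hsplit2, hlt, hdiag, hswap]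
  ring

/-- Per-slot identity: the non-deviator revenue plus the pair correction does
not depend on the deviator's coordinate. -/
lemma slot_eq {I : ℕ} (i : Fin I) (u v : Fin I → ℝ) (h : ∀ j, j ≠ i → u j = v j)
    (b c : ℝ) :
    (∑ j ∈ Finset.univ.erase i, u j * (b - c * ∑ k, u k))
      + c * ∑ p ∈ Finset.univ.filter (fun p : Fin I × Fin I => p.1 < p.2), u p.1 * u p.2
    = (∑ j ∈ Finset.univ.erase i, v j * (b - c * ∑ k, v k))
      + c * ∑ p ∈ Finset.univ.filter (fun p : Fin I × Fin I => p.1 < p.2), v p.1 * v p.2 := by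
  set s := ∑ j ∈ Finset.univ.erase i, u j with hs
  set Q := ∑ j ∈ Finset.univ.erase i, (u j) ^ 2 with hQ
  have hsv : ∑ j ∈ Finset.univ.erase i, v j = s :=
    (Finset.sum_congr rfl fun j hj => (h j (Finset.mem_erase.1 hj).1).symm)
  have hQv : ∑ j ∈ Finset.univ.erase i, (v j) ^ 2 = Q :=
    (Finset.sum_congr rfl fun j hj => by rw [h j (Finset.mem_erase.1 hj).1])
  have key : ∀ w : Fin I → ℝ, (∑ j ∈ Finset.univ.erase i, w j) = s →
      (∑ j ∈ Finset.univ.erase i, (w j) ^ 2) = Q →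
      (∑ j ∈ Finset.univ.erase i, w j * (b - c * ∑ k, w k))
        + c * ∑ p ∈ Finset.univ.filter (fun p : Fin I × Fin I => p.1 < p.2), w p.1 * w p.2
      = s * b - c * s ^ 2 / 2 - c * Q / 2 := by
    intro w hws hwq
    have hS : ∑ k, w k = w i + s := by
      rw [← hws]; exact (Finset.add_sum_erase _ _ (Finset.mem_univ i)).symm
    have hS2 : ∑ k, (w k) ^ 2 = (w i) ^ 2 + Q := by
      rw [← hwq]; exact (Finset.add_sum_erase _ _ (Finset.mem_univ i)).symm
    have hpair := two_mul_pairsum w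
    rw [hS, hS2] at hpair
    have h1 : (∑ j ∈ Finset.univ.erase i, w j * (b - c * ∑ k, w k))
        = s * (b - c * (w i + s)) := by
      rw [← Finset.sum_mul, hws, hS]
    rw [h1]
    linear_combination (c / 2) * hpair
  rw [key u rfl rfl, key v hsv hQv]

/-- The storage-investment game with linear price function is an
exact potential game: unilateral deviations change `Φ` exactly as they change
the deviator's payoff. -/
theorem storage_game_exact_potential {I : ℕ} {Ω : Type*} [Fintype Ω] (T : ℕ)
    (ρ : Ω → ℝ) (π0 a : Ω → ℕ → ℝ) (κ : ℝ) (cS cP cch cdis : Fin I → ℝ)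
    (hρ : ∀ ω, 0 ≤ ρ ω) (ha : ∀ ω t, 0 ≤ a ω t) :
    ∀ (i : Fin I) (x : Fin I → StorageDec Ω) (xi xi' : StorageDec Ω),
      potential T ρ π0 a κ cS cP cch cdis (Function.update x i xi)
        - potential T ρ π0 a κ cS cP cch cdis (Function.update x i xi')
      = payoff T ρ π0 a κ cS cP cch cdis i (Function.update x i xi)
        - payoff T ρ π0 a κ cS cP cch cdis i (Function.update x i xi') := by
  intro i x xi xi'
  -- It suffices to show Φ(y) - f_i(y) = Φ(z) - f_i(z) for y,z agreeing off i.
  suffices h : ∀ (y z : Fin I → StorageDec Ω), (∀ j, j ≠ i → y j = z j) →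
      potential T ρ π0 a κ cS cP cch cdis y - payoff T ρ π0 a κ cS cP cch cdis i y
      = potential T ρ π0 a κ cS cP cch cdis z - payoff T ρ π0 a κ cS cP cch cdis i z by
    have := h (Function.update x i xi) (Function.update x i xi')
      (fun j hj => by rw [Function.update_of_ne hj, Function.update_of_ne hj])
    linarith
  -- A normal form for Φ(w) - f_i(w).
  have decomp : ∀ w : Fin I → StorageDec Ω,
      potential T ρ π0 a κ cS cP cch cdis w - payoff T ρ π0 a κ cS cP cch cdis i w
      = (∑ ω, ρ ω * ∑ t ∈ Finset.Icc 1 T,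
          ((∑ j ∈ Finset.univ.erase i,
              netDis (w j) ω t * (π0 ω t - a ω t * ∑ k, netDis (w k) ω t))
            + a ω t * ∑ p ∈ Finset.univ.filter (fun p : Fin I × Fin I => p.1 < p.2),
                netDis (w p.1) ω t * netDis (w p.2) ω t))
        - ∑ j ∈ Finset.univ.erase i,
            ((κ * cS j * (w j).1 + κ * cP j * (w j).2.1)
              + ∑ ω, ρ ω * ∑ t ∈ Finset.Icc 1 T,
                  (cch j * (w j).2.2.1 ω t + cdis j * (w j).2.2.2.1 ω t)) := by
    intro w
    have hsum : (∑ j, payoff T ρ π0 a κ cS cP cch cdis j w)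
        = payoff T ρ π0 a κ cS cP cch cdis i w
          + ∑ j ∈ Finset.univ.erase i, payoff T ρ π0 a κ cS cP cch cdis j w :=
      (Finset.add_sum_erase _ _ (Finset.mem_univ i)).symm
    rw [potential, hsum]
    have hpay : ∑ j ∈ Finset.univ.erase i, payoff T ρ π0 a κ cS cP cch cdis j w
        = (∑ j ∈ Finset.univ.erase i, ∑ ω, ρ ω * ∑ t ∈ Finset.Icc 1 T,
            netDis (w j) ω t * (π0 ω t - a ω t * ∑ k, netDis (w k) ω t))
          - ∑ j ∈ Finset.univ.erase i,
              ((κ * cS j * (w j).1 + κ * cP j * (w j).2.1)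
                + ∑ ω, ρ ω * ∑ t ∈ Finset.Icc 1 T,
                    (cch j * (w j).2.2.1 ω t + cdis j * (w j).2.2.2.1 ω t)) := by
      rw [← Finset.sum_sub_distrib]
      refine Finset.sum_congr rfl fun j _ => ?_
      rw [payoff]; ring
    have hA : (∑ j ∈ Finset.univ.erase i, ∑ ω, ρ ω * ∑ t ∈ Finset.Icc 1 T,
          netDis (w j) ω t * (π0 ω t - a ω t * ∑ k, netDis (w k) ω t))
        = ∑ ω, ρ ω * ∑ t ∈ Finset.Icc 1 T, ∑ j ∈ Finset.univ.erase i,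
            netDis (w j) ω t * (π0 ω t - a ω t * ∑ k, netDis (w k) ω t) := by
      rw [Finset.sum_comm]
      refine Finset.sum_congr rfl fun ω _ => ?_
      rw [← Finset.mul_sum, Finset.sum_comm]
    have hP : ∀ ω t, (∑ p ∈ Finset.univ.filter (fun p : Fin I × Fin I => p.1 < p.2),
          a ω t * (netDis (w p.1) ω t * netDis (w p.2) ω t))
        = a ω t * ∑ p ∈ Finset.univ.filter (fun p : Fin I × Fin I => p.1 < p.2),
            netDis (w p.1) ω t * netDis (w p.2) ω t := by
      intro ω t; rw [Finset.mul_sum]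
    rw [hpay]
    have hmerge : (∑ ω, ρ ω * ∑ t ∈ Finset.Icc 1 T, ∑ j ∈ Finset.univ.erase i,
          netDis (w j) ω t * (π0 ω t - a ω t * ∑ k, netDis (w k) ω t))
        + (∑ ω, ρ ω * ∑ t ∈ Finset.Icc 1 T,
            ∑ p ∈ Finset.univ.filter (fun p : Fin I × Fin I => p.1 < p.2),
              a ω t * (netDis (w p.1) ω t * netDis (w p.2) ω t))
        = ∑ ω, ρ ω * ∑ t ∈ Finset.Icc 1 T,
            ((∑ j ∈ Finset.univ.erase i,
                netDis (w j) ω t * (π0 ω t - a ω t * ∑ k, netDis (w k) ω t))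
              + a ω t * ∑ p ∈ Finset.univ.filter (fun p : Fin I × Fin I => p.1 < p.2),
                  netDis (w p.1) ω t * netDis (w p.2) ω t) := by
      rw [← Finset.sum_add_distrib]
      refine Finset.sum_congr rfl fun ω _ => ?_
      rw [← mul_add, ← Finset.sum_add_distrib]
      congr 1
      refine Finset.sum_congr rfl fun t _ => ?_
      rw [hP]
    rw [hA, ← hmerge]
    ring
  intro y z hyz
  rw [decomp y, decomp z]
  have hcost : ∑ j ∈ Finset.univ.erase i,
        ((κ * cS j * (y j).1 + κ * cP j * (y j).2.1)
          + ∑ ω, ρ ω * ∑ t ∈ Finset.Icc 1 T,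
              (cch j * (y j).2.2.1 ω t + cdis j * (y j).2.2.2.1 ω t))
      = ∑ j ∈ Finset.univ.erase i,
        ((κ * cS j * (z j).1 + κ * cP j * (z j).2.1)
          + ∑ ω, ρ ω * ∑ t ∈ Finset.Icc 1 T,
              (cch j * (z j).2.2.1 ω t + cdis j * (z j).2.2.2.1 ω t)) := by
    refine Finset.sum_congr rfl fun j hj => ?_
    rw [hyz j (Finset.mem_erase.1 hj).1]
  rw [hcost]
  congr 1
  refine Finset.sum_congr rfl fun ω _ => ?_
  congr 1
  refine Finset.sum_congr rfl fun t _ => ?_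
  exact slot_eq i (fun j => netDis (y j) ω t) (fun j => netDis (z j) ω t)
    (fun j hj => show netDis (y j) ω t = netDis (z j) ω t by rw [hyz j hj]) (π0 ω t) (a ω t)
end

section
/- Any maximizer x* of the potential function Φ(x) = ∑_i f_i(x) + E_ω[∑_t ∑_{i<j} a^ω[t]·q_i^ω[t] q_j^ω[t]] over the product set ∏_i X_i is a pure strategy Nash equilibrium of the storage-investment game G: for every i and every x_i ∈ X_i, f_i(x_i*, x_{-i}*) ≥ f_i(x_i, x_{-i}*). -/
lemma pair_repr {I : ℕ} (f : Fin I → Fin I → ℝ) :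
    ∑ p ∈ Finset.univ.filter (fun p : Fin I × Fin I => p.1 < p.2), f p.1 p.2
      = ∑ j, ∑ k ∈ Finset.Ioi j, f j k := by
  rw [← Finset.univ_product_univ, Finset.sum_filter, Finset.sum_product]
  refine Finset.sum_congr rfl fun j _ => ?_
  rw [Finset.sum_ite, Finset.sum_const_zero, add_zero]
  apply Finset.sum_congr _ (fun _ _ => rfl)
  ext k; simp

lemma erase_split {I : ℕ} (i : Fin I) (q : Fin I → ℝ) :
    ∑ j ∈ Finset.univ.erase i, q j = (∑ j ∈ Finset.Iio i, q j) + ∑ j ∈ Finset.Ioi i, q j := by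
  have hset : Finset.univ.erase i = Finset.Iio i ∪ Finset.Ioi i := by
    ext j
    simp only [Finset.mem_erase, Finset.mem_union, Finset.mem_Iio, Finset.mem_Ioi,
      Finset.mem_univ, and_true]
    omega
  rw [hset, Finset.sum_union (by simp [Finset.disjoint_left]; omega)]

lemma G_inv {I : ℕ} (q : Fin I → ℝ) (i : Fin I) (v b c : ℝ) :
    (∑ j ∈ Finset.univ.erase i,
        Function.update q i v j * (b - c * ∑ k, Function.update q i v k))
      + ∑ p ∈ Finset.univ.filter (fun p : Fin I × Fin I => p.1 < p.2),
          c * (Function.update q i v p.1 * Function.update q i v p.2)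
    = (∑ j ∈ Finset.univ.erase i, q j * (b - c * ∑ k, q k))
      + ∑ p ∈ Finset.univ.filter (fun p : Fin I × Fin I => p.1 < p.2),
          c * (q p.1 * q p.2) := by
  classical
  set u := Function.update q i v with hu
  have hq_on : ∀ j ∈ Finset.univ.erase i, u j = q j := fun j hj =>
    Function.update_of_ne (Finset.mem_erase.1 hj).1 _ _
  set R := ∑ j ∈ Finset.univ.erase i, q j with hRdef
  have hSu : ∑ k, u k = v + R := by
    rw [hu, Finset.sum_update_of_mem (Finset.mem_univ i),
      Finset.sdiff_singleton_eq_erase]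
  have hSq : ∑ k, q k = q i + R := (Finset.add_sum_erase _ _ (Finset.mem_univ i)).symm
  -- abbreviation for the "tail" sums
  set A : Fin I → ℝ := fun j => ∑ k ∈ Finset.Ioi j, q k with hAdef
  have hA : ∀ j, ∑ k ∈ Finset.Ioi j, u k = A j + (if j < i then v - q i else 0) := by
    intro j
    by_cases hj : j < i
    · rw [if_pos hj, hu]
      have hi : i ∈ Finset.Ioi j := Finset.mem_Ioi.2 hj
      rw [Finset.sum_update_of_mem hi, Finset.sdiff_singleton_eq_erase]
      have h2 : A j = q i + ∑ x ∈ (Finset.Ioi j).erase i, q x :=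
        (Finset.add_sum_erase _ q hi).symm
      rw [h2]; ring
    · rw [if_neg hj, add_zero]
      refine Finset.sum_congr rfl fun k hk => Function.update_of_ne ?_ _ _
      rintro rfl
      exact hj (Finset.mem_Ioi.1 hk)
  -- rewrite pair sums
  rw [pair_repr (fun j k => c * (u j * u k)), pair_repr (fun j k => c * (q j * q k))]
  have hPu : ∑ j, ∑ k ∈ Finset.Ioi j, c * (u j * u k)
      = c * v * A i + (∑ j ∈ Finset.univ.erase i, c * q j * A j)
        + c * (v - q i) * ∑ j ∈ Finset.Iio i, q j := by
    have h1 : ∀ j, ∑ k ∈ Finset.Ioi j, c * (u j * u k)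
        = c * u j * A j + c * u j * (if j < i then v - q i else 0) := by
      intro j
      calc ∑ k ∈ Finset.Ioi j, c * (u j * u k)
          = c * u j * ∑ k ∈ Finset.Ioi j, u k := by
            rw [Finset.mul_sum]; exact Finset.sum_congr rfl fun k _ => by ring
        _ = c * u j * A j + c * u j * (if j < i then v - q i else 0) := by
            rw [hA j]; ring
    simp only [h1]
    rw [Finset.sum_add_distrib]
    congr 1
    · rw [← Finset.add_sum_erase _ (fun j => c * u j * A j) (Finset.mem_univ i)]
      have hui : u i = v := Function.update_self _ _ _
      rw [hui]
      congr 1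
      exact Finset.sum_congr rfl fun j hj => by rw [hq_on j hj]
    · have h2 : ∀ j, c * u j * (if j < i then v - q i else 0)
          = if j < i then c * (v - q i) * q j else 0 := by
        intro j
        by_cases hj : j < i
        · rw [if_pos hj, if_pos hj, hu, Function.update_of_ne (ne_of_lt hj)]
          ring
        · simp [hj]
      simp only [h2]
      rw [Finset.sum_ite, Finset.sum_const_zero, add_zero, Finset.mul_sum]
      apply Finset.sum_congr _ (fun _ _ => rfl)
      ext k; simp
  have hPq : ∑ j, ∑ k ∈ Finset.Ioi j, c * (q j * q k)
      = c * q i * A i + ∑ j ∈ Finset.univ.erase i, c * q j * A j := by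
    have h1 : ∀ j, ∑ k ∈ Finset.Ioi j, c * (q j * q k) = c * q j * A j := by
      intro j
      rw [show c * q j * A j = c * q j * ∑ k ∈ Finset.Ioi j, q k from rfl,
        Finset.mul_sum]
      exact Finset.sum_congr rfl fun k _ => by ring
    simp only [h1]
    exact (Finset.add_sum_erase _ _ (Finset.mem_univ i)).symm
  have hL1 : ∑ j ∈ Finset.univ.erase i, u j * (b - c * ∑ k, u k)
      = R * (b - c * (v + R)) := by
    rw [hSu, ← Finset.sum_mul]
    congr 1
    exact Finset.sum_congr rfl hq_on
  have hL2 : ∑ j ∈ Finset.univ.erase i, q j * (b - c * ∑ k, q k)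
      = R * (b - c * (q i + R)) := by
    rw [hSq, ← Finset.sum_mul]
  have hsplit : R = (∑ j ∈ Finset.Iio i, q j) + A i := by
    rw [hRdef, hAdef]; exact erase_split i q
  rw [hPu, hPq, hL1, hL2]
  rw [hsplit]
  ring

lemma swap3 {α β γ : Type*} (s : Finset α) (S2 : Finset β) (S3 : Finset γ)
    (ρ : β → ℝ) (g : α → β → γ → ℝ) :
    ∑ j ∈ s, ∑ ω ∈ S2, ρ ω * ∑ t ∈ S3, g j ω t
      = ∑ ω ∈ S2, ρ ω * ∑ t ∈ S3, ∑ j ∈ s, g j ω t := by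
  rw [Finset.sum_comm]
  refine Finset.sum_congr rfl fun ω _ => ?_
  rw [← Finset.mul_sum, Finset.sum_comm]

lemma pot_sub {I : ℕ} {Ω : Type*} [Fintype Ω] (T : ℕ)
    (ρ : Ω → ℝ) (π0 a : Ω → ℕ → ℝ) (κ : ℝ) (cS cP cch cdis : Fin I → ℝ)
    (i : Fin I) (x : Fin I → StorageDec Ω) :
    potential T ρ π0 a κ cS cP cch cdis x - payoff T ρ π0 a κ cS cP cch cdis i x
      = (∑ ω, ρ ω * ∑ t ∈ Finset.Icc 1 T,
          ((∑ j ∈ Finset.univ.erase i,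
              netDis (x j) ω t * (π0 ω t - a ω t * ∑ k, netDis (x k) ω t))
            + ∑ p ∈ Finset.univ.filter (fun p : Fin I × Fin I => p.1 < p.2),
                a ω t * (netDis (x p.1) ω t * netDis (x p.2) ω t)))
        - (∑ j ∈ Finset.univ.erase i, (κ * cS j * (x j).1 + κ * cP j * (x j).2.1))
        - ∑ j ∈ Finset.univ.erase i, ∑ ω, ρ ω * ∑ t ∈ Finset.Icc 1 T,
            (cch j * (x j).2.2.1 ω t + cdis j * (x j).2.2.2.1 ω t) := by
  unfold potential payoff
  rw [← Finset.add_sum_erase _ _ (Finset.mem_univ i)]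
  rw [Finset.sum_sub_distrib, Finset.sum_sub_distrib]
  rw [swap3 (Finset.univ.erase i) Finset.univ (Finset.Icc 1 T) ρ
    (fun j ω t => netDis (x j) ω t * (π0 ω t - a ω t * ∑ k, netDis (x k) ω t))]
  have hcomb : ∑ ω, ρ ω * ∑ t ∈ Finset.Icc 1 T,
        ((∑ j ∈ Finset.univ.erase i,
            netDis (x j) ω t * (π0 ω t - a ω t * ∑ k, netDis (x k) ω t))
          + ∑ p ∈ Finset.univ.filter (fun p : Fin I × Fin I => p.1 < p.2),
              a ω t * (netDis (x p.1) ω t * netDis (x p.2) ω t))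
      = (∑ ω, ρ ω * ∑ t ∈ Finset.Icc 1 T,
          ∑ j ∈ Finset.univ.erase i,
            netDis (x j) ω t * (π0 ω t - a ω t * ∑ k, netDis (x k) ω t))
        + ∑ ω, ρ ω * ∑ t ∈ Finset.Icc 1 T,
            ∑ p ∈ Finset.univ.filter (fun p : Fin I × Fin I => p.1 < p.2),
              a ω t * (netDis (x p.1) ω t * netDis (x p.2) ω t) := by
    rw [← Finset.sum_add_distrib]
    refine Finset.sum_congr rfl fun ω _ => ?_
    rw [← mul_add, ← Finset.sum_add_distrib]
  rw [hcomb]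
  ring

/-- Any maximizer of the potential `Φ` over the product of the
strategy sets `∏_i X_i` is a pure strategy Nash equilibrium of the
storage-investment game. -/
theorem potential_maximizer_is_nash {I : ℕ} {Ω : Type*} [Fintype Ω] (T : ℕ)
    (ρ : Ω → ℝ) (π0 a : Ω → ℕ → ℝ) (κ : ℝ) (cS cP cch cdis : Fin I → ℝ)
    (hρ : ∀ ω, 0 ≤ ρ ω) (ha : ∀ ω t, 0 ≤ a ω t)
    (X : Fin I → Set (StorageDec Ω))
    (xstar : Fin I → StorageDec Ω)
    (hfeas : ∀ i, xstar i ∈ X i)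
    (hmax : ∀ x : Fin I → StorageDec Ω, (∀ i, x i ∈ X i) →
      potential T ρ π0 a κ cS cP cch cdis x
        ≤ potential T ρ π0 a κ cS cP cch cdis xstar) :
    ∀ (i : Fin I), ∀ xi ∈ X i,
      payoff T ρ π0 a κ cS cP cch cdis i (Function.update xstar i xi)
        ≤ payoff T ρ π0 a κ cS cP cch cdis i xstar := by
  intro i xi hxi
  classical
  set y := Function.update xstar i xi with hy
  have hyfeas : ∀ j, y j ∈ X j := by
    intro j
    rcases eq_or_ne j i with rfl | h
    · simpa [hy] using hxi
    · simpa [hy, Function.update_of_ne h] using hfeas j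
  have hle := hmax y hyfeas
  have hnet : ∀ (j : Fin I) (ω : Ω) (t : ℕ),
      netDis (y j) ω t
        = Function.update (fun j => netDis (xstar j) ω t) i (netDis xi ω t) j := by
    intro j ω t
    rcases eq_or_ne j i with rfl | h
    · simp [hy]
    · simp [hy, Function.update_of_ne h]
  have hkey : potential T ρ π0 a κ cS cP cch cdis y
        - payoff T ρ π0 a κ cS cP cch cdis i y
      = potential T ρ π0 a κ cS cP cch cdis xstar
        - payoff T ρ π0 a κ cS cP cch cdis i xstar := by
    rw [pot_sub, pot_sub]
    have hcost1 : ∑ j ∈ Finset.univ.erase i,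
          (κ * cS j * (y j).1 + κ * cP j * (y j).2.1)
        = ∑ j ∈ Finset.univ.erase i,
          (κ * cS j * (xstar j).1 + κ * cP j * (xstar j).2.1) :=
      Finset.sum_congr rfl fun j hj => by
        rw [hy, Function.update_of_ne (Finset.mem_erase.1 hj).1]
    have hcost2 : ∑ j ∈ Finset.univ.erase i, ∑ ω, ρ ω * ∑ t ∈ Finset.Icc 1 T,
          (cch j * (y j).2.2.1 ω t + cdis j * (y j).2.2.2.1 ω t)
        = ∑ j ∈ Finset.univ.erase i, ∑ ω, ρ ω * ∑ t ∈ Finset.Icc 1 T,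
          (cch j * (xstar j).2.2.1 ω t + cdis j * (xstar j).2.2.2.1 ω t) :=
      Finset.sum_congr rfl fun j hj => by
        rw [hy, Function.update_of_ne (Finset.mem_erase.1 hj).1]
    have hrev : ∑ ω, ρ ω * ∑ t ∈ Finset.Icc 1 T,
          ((∑ j ∈ Finset.univ.erase i,
              netDis (y j) ω t * (π0 ω t - a ω t * ∑ k, netDis (y k) ω t))
            + ∑ p ∈ Finset.univ.filter (fun p : Fin I × Fin I => p.1 < p.2),
                a ω t * (netDis (y p.1) ω t * netDis (y p.2) ω t))
        = ∑ ω, ρ ω * ∑ t ∈ Finset.Icc 1 T,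
          ((∑ j ∈ Finset.univ.erase i,
              netDis (xstar j) ω t * (π0 ω t - a ω t * ∑ k, netDis (xstar k) ω t))
            + ∑ p ∈ Finset.univ.filter (fun p : Fin I × Fin I => p.1 < p.2),
                a ω t * (netDis (xstar p.1) ω t * netDis (xstar p.2) ω t)) := by
      refine Finset.sum_congr rfl fun ω _ => ?_
      congr 1
      refine Finset.sum_congr rfl fun t _ => ?_
      simp only [hnet]
      exact G_inv (fun j => netDis (xstar j) ω t) i (netDis xi ω t) (π0 ω t) (a ω t)
    rw [hcost1, hcost2, hrev]
  linarith
end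

section
/- If each investor's duration constraint has a finite upper bound ᾱ_i < ∞ and the power rating is bounded by P_i ≤ P̄ for some P̄ (so that the strategy set X_i with this additional bound is compact), then the storage-investment game G admits a pure strategy Nash equilibrium. -/
/-- Investor `i`'s feasible set: storage operation constraints, linearized
duration constraint with finite upper bound `αhi i`, and the additional
power-rating bound `P ≤ Pbar` (which makes the set compact). -/
def feasSet {Ω : Type*} (T : ℕ) (ηc ηd αlo αhi Pbar : ℝ) :
    Set (StorageDec Ω) :=
  {x | (∀ ω, ∀ t ∈ Finset.Icc 1 T, 0 ≤ x.2.2.2.1 ω t ∧ x.2.2.2.1 ω t ≤ x.2.1) ∧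
       (∀ ω, ∀ t ∈ Finset.Icc 1 T, 0 ≤ x.2.2.1 ω t ∧ x.2.2.1 ω t ≤ x.2.1) ∧
       (∀ ω, ∀ t ∈ Finset.Icc 1 T,
         x.2.2.2.2 ω t = x.2.2.2.2 ω (t - 1) + ηc * x.2.2.1 ω t - x.2.2.2.1 ω t / ηd) ∧
       (∀ ω, ∀ t ∈ Finset.Icc 0 T, 0 ≤ x.2.2.2.2 ω t ∧ x.2.2.2.2 ω t ≤ x.1) ∧
       (∀ ω, x.2.2.2.2 ω 0 = x.2.2.2.2 ω T) ∧
       (0 ≤ x.2.1 ∧ αlo * x.2.1 ≤ x.1 ∧ x.1 ≤ αhi * x.2.1) ∧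
       x.2.1 ≤ Pbar}

/-! ### Auxiliary lemmas -/

open Finset

lemma SG.two_mul_pairSum {n : ℕ} (u : Fin n → ℝ) :
    2 * ∑ p ∈ Finset.univ.filter (fun p : Fin n × Fin n => p.1 < p.2), u p.1 * u p.2
    = (∑ j, u j)^2 - ∑ j, (u j)^2 := by
  have h1 : (∑ j, u j)^2 = ∑ p ∈ Finset.univ ×ˢ (Finset.univ : Finset (Fin n)), u p.1 * u p.2 := by
    rw [sq, Finset.sum_mul_sum, ← Finset.sum_product']
  have h2 : Finset.univ ×ˢ (Finset.univ : Finset (Fin n)) = (Finset.univ : Finset (Fin n × Fin n)) := by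
    simp
  rw [h1, h2]
  rw [← Finset.sum_filter_add_sum_filter_not Finset.univ (fun p : Fin n × Fin n => p.1 < p.2)
      (fun p => u p.1 * u p.2)]
  have h3 : ∑ p ∈ Finset.univ.filter (fun p : Fin n × Fin n => ¬ p.1 < p.2), u p.1 * u p.2
      = (∑ p ∈ Finset.univ.filter (fun p : Fin n × Fin n => p.2 < p.1), u p.1 * u p.2)
        + ∑ p ∈ Finset.univ.filter (fun p : Fin n × Fin n => p.1 = p.2), u p.1 * u p.2 := by
    rw [← Finset.sum_filter_add_sum_filter_not
      (Finset.univ.filter (fun p : Fin n × Fin n => ¬ p.1 < p.2))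
      (fun p : Fin n × Fin n => p.2 < p.1) (fun p => u p.1 * u p.2)]
    congr 1
    · congr 1
      rw [Finset.filter_filter]
      apply Finset.filter_congr
      intro p _
      simp only [not_lt, and_iff_right_iff_imp]
      exact fun h => h.le
    · congr 1
      rw [Finset.filter_filter]
      apply Finset.filter_congr
      intro p _
      simp only [not_lt]
      constructor
      · rintro ⟨h1, h2⟩; exact le_antisymm h2 h1
      · rintro h; exact ⟨h.ge, h.le⟩
  have h4 : ∑ p ∈ Finset.univ.filter (fun p : Fin n × Fin n => p.2 < p.1), u p.1 * u p.2
      = ∑ p ∈ Finset.univ.filter (fun p : Fin n × Fin n => p.1 < p.2), u p.1 * u p.2 := by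
    apply Finset.sum_nbij' (i := Prod.swap) (j := Prod.swap) <;> simp [mul_comm]
  have h5 : ∑ p ∈ Finset.univ.filter (fun p : Fin n × Fin n => p.1 = p.2), u p.1 * u p.2
      = ∑ j, (u j)^2 := by
    rw [Finset.sum_filter, Fintype.sum_prod_type]
    simp [sq, Finset.sum_ite_eq]
  rw [h3, h4, h5]; ring

lemma SG.G_indep {n : ℕ} (i : Fin n) (u v : Fin n → ℝ) (huv : ∀ j, j ≠ i → u j = v j)
    (b c : ℝ) :
    ((∑ j, u j * (b - c * ∑ k, u k)) - u i * (b - c * ∑ k, u k)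
      + c * ∑ p ∈ Finset.univ.filter (fun p : Fin n × Fin n => p.1 < p.2), u p.1 * u p.2)
    = ((∑ j, v j * (b - c * ∑ k, v k)) - v i * (b - c * ∑ k, v k)
      + c * ∑ p ∈ Finset.univ.filter (fun p : Fin n × Fin n => p.1 < p.2), v p.1 * v p.2) := by
  have closed : ∀ w : Fin n → ℝ,
      ((∑ j, w j * (b - c * ∑ k, w k)) - w i * (b - c * ∑ k, w k)
        + c * ∑ p ∈ Finset.univ.filter (fun p : Fin n × Fin n => p.1 < p.2), w p.1 * w p.2)
      = b * (∑ j ∈ ({i}ᶜ : Finset (Fin n)), w j)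
        - c * (∑ j ∈ ({i}ᶜ : Finset (Fin n)), w j)^2/2
        - c * (∑ j ∈ ({i}ᶜ : Finset (Fin n)), (w j)^2)/2 := by
    intro w
    have hS := Fintype.sum_eq_add_sum_compl i w
    have hQ := Fintype.sum_eq_add_sum_compl i (fun j => (w j)^2)
    have hP := SG.two_mul_pairSum w
    rw [← Finset.sum_mul]
    set S := ∑ k, w k with hSdef
    set T := ∑ j ∈ ({i}ᶜ : Finset (Fin n)), w j with hTdef
    set P := ∑ p ∈ Finset.univ.filter (fun p : Fin n × Fin n => p.1 < p.2), w p.1 * w p.2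
      with hPdef
    set Q := ∑ j, (w j)^2 with hQdef
    set Q' := ∑ j ∈ ({i}ᶜ : Finset (Fin n)), (w j)^2 with hQ'def
    have hT : T = S - w i := by linarith
    have hQ'e : Q' = Q - (w i)^2 := by linarith
    have hP' : P = (S^2 - Q)/2 := by linarith
    rw [hT, hQ'e, hP']; ring
  rw [closed u, closed v]
  have e1 : ∑ j ∈ ({i}ᶜ : Finset (Fin n)), u j = ∑ j ∈ ({i}ᶜ : Finset (Fin n)), v j :=
    Finset.sum_congr rfl (fun j hj => huv j (by simpa using hj))
  have e2 : ∑ j ∈ ({i}ᶜ : Finset (Fin n)), (u j)^2 = ∑ j ∈ ({i}ᶜ : Finset (Fin n)), (v j)^2 :=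
    Finset.sum_congr rfl (fun j hj => by rw [huv j (by simpa using hj)])
  rw [e1, e2]

section Parts

variable {I : ℕ} {Ω : Type*} [Fintype Ω] (T : ℕ) (ρ : Ω → ℝ) (π0 a : Ω → ℕ → ℝ)
  (κ : ℝ) (cS cP cch cdis : Fin I → ℝ)

noncomputable def SG.revPart (i : Fin I) (x : Fin I → StorageDec Ω) : ℝ :=
  ∑ ω, ρ ω * ∑ t ∈ Finset.Icc 1 T,
    netDis (x i) ω t * (π0 ω t - a ω t * ∑ j, netDis (x j) ω t)

noncomputable def SG.costPart (i : Fin I) (xi : StorageDec Ω) : ℝ :=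
  (κ * cS i * xi.1 + κ * cP i * xi.2.1)
  + ∑ ω, ρ ω * ∑ t ∈ Finset.Icc 1 T, (cch i * xi.2.2.1 ω t + cdis i * xi.2.2.2.1 ω t)

noncomputable def SG.crossPart (x : Fin I → StorageDec Ω) : ℝ :=
  ∑ ω, ρ ω * ∑ t ∈ Finset.Icc 1 T,
    ∑ p ∈ Finset.univ.filter (fun p : Fin I × Fin I => p.1 < p.2),
      a ω t * (netDis (x p.1) ω t * netDis (x p.2) ω t)

lemma SG.payoff_eq (i : Fin I) (x : Fin I → StorageDec Ω) :
    payoff T ρ π0 a κ cS cP cch cdis i x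
      = SG.revPart T ρ π0 a i x - SG.costPart T ρ κ cS cP cch cdis i (x i) := by
  unfold payoff SG.revPart SG.costPart; ring

lemma SG.potential_eq (x : Fin I → StorageDec Ω) :
    potential T ρ π0 a κ cS cP cch cdis x
      = (∑ j, payoff T ρ π0 a κ cS cP cch cdis j x) + SG.crossPart T ρ a x := rfl

lemma SG.sum_rho_comm (s : Finset ℕ) (f : Fin I → Ω → ℕ → ℝ) :
    ∑ j, ∑ ω, ρ ω * ∑ t ∈ s, f j ω t = ∑ ω, ρ ω * ∑ t ∈ s, ∑ j, f j ω t := by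
  rw [Finset.sum_comm]
  apply Finset.sum_congr rfl; intro ω _
  rw [← Finset.mul_sum, Finset.sum_comm]

lemma SG.rev_cross (w : Fin I → StorageDec Ω) (i : Fin I) :
    (∑ j, SG.revPart T ρ π0 a j w) - SG.revPart T ρ π0 a i w + SG.crossPart T ρ a w
    = ∑ ω, ρ ω * ∑ t ∈ Finset.Icc 1 T,
        ((∑ j, netDis (w j) ω t * (π0 ω t - a ω t * ∑ k, netDis (w k) ω t))
          - netDis (w i) ω t * (π0 ω t - a ω t * ∑ k, netDis (w k) ω t)
          + a ω t * ∑ p ∈ Finset.univ.filter (fun p : Fin I × Fin I => p.1 < p.2),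
              netDis (w p.1) ω t * netDis (w p.2) ω t) := by
  unfold SG.revPart SG.crossPart
  rw [SG.sum_rho_comm]
  rw [← Finset.sum_sub_distrib, ← Finset.sum_add_distrib]
  apply Finset.sum_congr rfl; intro ω _
  rw [← mul_sub, ← mul_add]
  congr 1
  rw [← Finset.sum_sub_distrib, ← Finset.sum_add_distrib]
  apply Finset.sum_congr rfl; intro t _
  congr 1
  rw [Finset.mul_sum]

lemma SG.potential_sub_payoff (x : Fin I → StorageDec Ω) (i : Fin I) (y z : StorageDec Ω) :
    potential T ρ π0 a κ cS cP cch cdis (Function.update x i y)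
      - payoff T ρ π0 a κ cS cP cch cdis i (Function.update x i y)
    = potential T ρ π0 a κ cS cP cch cdis (Function.update x i z)
      - payoff T ρ π0 a κ cS cP cch cdis i (Function.update x i z) := by
  have main : ∀ y : StorageDec Ω,
      potential T ρ π0 a κ cS cP cch cdis (Function.update x i y)
        - payoff T ρ π0 a κ cS cP cch cdis i (Function.update x i y)
      = (∑ ω, ρ ω * ∑ t ∈ Finset.Icc 1 T,
          ((∑ j, netDis (Function.update x i y j) ω t *
              (π0 ω t - a ω t * ∑ k, netDis (Function.update x i y k) ω t))
            - netDis (Function.update x i y i) ω t *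
              (π0 ω t - a ω t * ∑ k, netDis (Function.update x i y k) ω t)
            + a ω t * ∑ p ∈ Finset.univ.filter (fun p : Fin I × Fin I => p.1 < p.2),
                netDis (Function.update x i y p.1) ω t * netDis (Function.update x i y p.2) ω t))
        - ∑ j ∈ ({i}ᶜ : Finset (Fin I)), SG.costPart T ρ κ cS cP cch cdis j (x j) := by
    intro y
    rw [SG.potential_eq]
    simp only [SG.payoff_eq]
    rw [Finset.sum_sub_distrib]
    rw [← SG.rev_cross]
    have hcost : ∑ j, SG.costPart T ρ κ cS cP cch cdis j (Function.update x i y j)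
        - SG.costPart T ρ κ cS cP cch cdis i (Function.update x i y i)
        = ∑ j ∈ ({i}ᶜ : Finset (Fin I)), SG.costPart T ρ κ cS cP cch cdis j (x j) := by
      rw [Fintype.sum_eq_add_sum_compl i]
      have : ∀ j ∈ ({i}ᶜ : Finset (Fin I)),
          SG.costPart T ρ κ cS cP cch cdis j (Function.update x i y j)
          = SG.costPart T ρ κ cS cP cch cdis j (x j) := by
        intro j hj
        rw [Function.update_of_ne (by simpa using hj)]
      rw [Finset.sum_congr rfl this]
      ring
    rw [← hcost]
    ring
  rw [main y, main z]
  have hq : ∀ (y : StorageDec Ω) (j : Fin I), j ≠ i → ∀ ω t,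
      netDis (Function.update x i y j) ω t = netDis (x j) ω t := by
    intro y j hj ω t; rw [Function.update_of_ne hj]
  congr 1
  apply Finset.sum_congr rfl; intro ω _
  congr 1
  apply Finset.sum_congr rfl; intro t _
  have h1 : ∀ p ∈ Finset.univ.filter (fun p : Fin I × Fin I => p.1 < p.2), True := fun _ _ => trivial
  exact SG.G_indep i (fun j => netDis (Function.update x i y j) ω t)
    (fun j => netDis (Function.update x i z j) ω t)
    (fun j hj => by simpa using (hq y j hj ω t).trans (hq z j hj ω t).symm) (π0 ω t) (a ω t)

lemma SG.payoff_congr (i : Fin I) (x y : Fin I → StorageDec Ω)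
    (h1 : ∀ j, (x j).1 = (y j).1) (h2 : ∀ j, (x j).2.1 = (y j).2.1)
    (h3 : ∀ j ω, ∀ t ∈ Finset.Icc 1 T, (x j).2.2.1 ω t = (y j).2.2.1 ω t)
    (h4 : ∀ j ω, ∀ t ∈ Finset.Icc 1 T, (x j).2.2.2.1 ω t = (y j).2.2.2.1 ω t) :
    payoff T ρ π0 a κ cS cP cch cdis i x = payoff T ρ π0 a κ cS cP cch cdis i y := by
  have hq : ∀ j ω, ∀ t ∈ Finset.Icc 1 T, netDis (x j) ω t = netDis (y j) ω t := by
    intro j ω t ht; unfold netDis; rw [h3 j ω t ht, h4 j ω t ht]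
  unfold payoff
  refine congrArg₂ (· - ·) (congrArg₂ (· - ·) ?_ ?_) ?_
  · apply Finset.sum_congr rfl; intro ω _
    refine congrArg (ρ ω * ·) (Finset.sum_congr rfl fun t ht => ?_)
    rw [hq i ω t ht, Finset.sum_congr rfl (fun j _ => hq j ω t ht)]
  · rw [h1 i, h2 i]
  · apply Finset.sum_congr rfl; intro ω _
    refine congrArg (ρ ω * ·) (Finset.sum_congr rfl fun t ht => ?_)
    rw [h3 i ω t ht, h4 i ω t ht]

end Parts

/-! ### Compactness of the truncated feasible set -/

lemma SG.isClosed_forall {α β : Type*} [TopologicalSpace α] (p : β → α → Prop)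
    (h : ∀ b, IsClosed {x | p b x}) : IsClosed {x : α | ∀ b, p b x} := by
  have : {x : α | ∀ b, p b x} = ⋂ b, {x | p b x} := by ext; simp
  rw [this]; exact isClosed_iInter h

def SG.truncSet {Ω : Type*} (T : ℕ) (ηc ηd αlo αhi Pbar : ℝ) : Set (StorageDec Ω) :=
  feasSet T ηc ηd αlo αhi Pbar ∩
  {x | (∀ ω, ∀ t, t ∉ Finset.Icc 1 T → x.2.2.1 ω t = 0) ∧
       (∀ ω, ∀ t, t ∉ Finset.Icc 1 T → x.2.2.2.1 ω t = 0) ∧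
       (∀ ω, ∀ t, ¬ t ≤ T → x.2.2.2.2 ω t = 0)}

def SG.trunc {Ω : Type*} (T : ℕ) (x : StorageDec Ω) : StorageDec Ω :=
  (x.1, x.2.1, fun ω t => if t ∈ Finset.Icc 1 T then x.2.2.1 ω t else 0,
   fun ω t => if t ∈ Finset.Icc 1 T then x.2.2.2.1 ω t else 0,
   fun ω t => if t ≤ T then x.2.2.2.2 ω t else 0)

section Comp
variable {Ω : Type*} (T : ℕ) (ηc ηd αlo αhi Pbar : ℝ)

lemma SG.isClosed_truncSet : IsClosed (SG.truncSet (Ω := Ω) T ηc ηd αlo αhi Pbar) := by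
  apply IsClosed.inter
  · unfold feasSet
    simp only [Set.setOf_and]
    refine IsClosed.inter ?_ (IsClosed.inter ?_ (IsClosed.inter ?_ (IsClosed.inter ?_
      (IsClosed.inter ?_ (IsClosed.inter ?_ ?_)))))
    · apply SG.isClosed_forall; intro ω; apply SG.isClosed_forall; intro t
      by_cases ht : t ∈ Finset.Icc 1 T
      · simp only [ht, forall_true_left]
        rw [Set.setOf_and]
        exact (isClosed_le continuous_const (by fun_prop)).inter
          (isClosed_le (by fun_prop) (by fun_prop))
      · simp only [ht]; simp
    · apply SG.isClosed_forall; intro ω; apply SG.isClosed_forall; intro t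
      by_cases ht : t ∈ Finset.Icc 1 T
      · simp only [ht, forall_true_left]
        rw [Set.setOf_and]
        exact (isClosed_le continuous_const (by fun_prop)).inter
          (isClosed_le (by fun_prop) (by fun_prop))
      · simp only [ht]; simp
    · apply SG.isClosed_forall; intro ω; apply SG.isClosed_forall; intro t
      by_cases ht : t ∈ Finset.Icc 1 T
      · simp only [ht, forall_true_left]
        exact isClosed_eq (by fun_prop) (by fun_prop)
      · simp only [ht]; simp
    · apply SG.isClosed_forall; intro ω; apply SG.isClosed_forall; intro t
      by_cases ht : t ∈ Finset.Icc 0 T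
      · simp only [ht, forall_true_left]
        rw [Set.setOf_and]
        exact (isClosed_le continuous_const (by fun_prop)).inter
          (isClosed_le (by fun_prop) (by fun_prop))
      · simp only [ht]; simp
    · apply SG.isClosed_forall; intro ω
      exact isClosed_eq (by fun_prop) (by fun_prop)
    · exact (isClosed_le continuous_const (by fun_prop)).inter
        ((isClosed_le (by fun_prop) (by fun_prop)).inter
          (isClosed_le (by fun_prop) (by fun_prop)))
    · exact isClosed_le (by fun_prop) continuous_const
  · simp only [Set.setOf_and]
    refine IsClosed.inter ?_ (IsClosed.inter ?_ ?_)
    · apply SG.isClosed_forall; intro ω; apply SG.isClosed_forall; intro t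
      by_cases ht : t ∉ Finset.Icc 1 T
      · simp only [eq_true ht, true_implies]
        exact isClosed_eq (by fun_prop) continuous_const
      · simp only [ht]; simp
    · apply SG.isClosed_forall; intro ω; apply SG.isClosed_forall; intro t
      by_cases ht : t ∉ Finset.Icc 1 T
      · simp only [eq_true ht, true_implies]
        exact isClosed_eq (by fun_prop) continuous_const
      · simp only [ht]; simp
    · apply SG.isClosed_forall; intro ω; apply SG.isClosed_forall; intro t
      by_cases ht : ¬ t ≤ T
      · simp only [eq_true ht, true_implies]
        exact isClosed_eq (by fun_prop) continuous_const
      · simp only [ht]; simp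

lemma SG.isCompact_truncSet (hαlo : 0 < αlo) (hα : αlo ≤ αhi) (hPbar : 0 ≤ Pbar) :
    IsCompact (SG.truncSet (Ω := Ω) T ηc ηd αlo αhi Pbar) := by
  set B := αhi * Pbar with hB
  have hB0 : 0 ≤ B := mul_nonneg (le_trans hαlo.le hα) hPbar
  set C : Set (StorageDec Ω) := (Set.Icc 0 B) ×ˢ ((Set.Icc 0 Pbar) ×ˢ
    ((Set.pi Set.univ fun _ : Ω => Set.pi Set.univ fun _ : ℕ => Set.Icc (0:ℝ) Pbar) ×ˢ
     ((Set.pi Set.univ fun _ : Ω => Set.pi Set.univ fun _ : ℕ => Set.Icc (0:ℝ) Pbar) ×ˢ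
      (Set.pi Set.univ fun _ : Ω => Set.pi Set.univ fun _ : ℕ => Set.Icc (0:ℝ) B)))) with hC
  have hCcomp : IsCompact C := by
    refine isCompact_Icc.prod (isCompact_Icc.prod (IsCompact.prod ?_ (IsCompact.prod ?_ ?_))) <;>
      exact isCompact_univ_pi fun _ => isCompact_univ_pi fun _ => isCompact_Icc
  apply IsCompact.of_isClosed_subset hCcomp (SG.isClosed_truncSet T ηc ηd αlo αhi Pbar)
  rintro x ⟨⟨hdis, hch, _, he, _, ⟨hP0, hSlo, hShi⟩, hPb⟩, hzch, hzdis, hze⟩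
  have hS0 : 0 ≤ x.1 := le_trans (mul_nonneg hαlo.le hP0) hSlo
  have hSB : x.1 ≤ B := le_trans hShi (by
    have : αhi * x.2.1 ≤ αhi * Pbar :=
      mul_le_mul_of_nonneg_left hPb (le_trans hαlo.le hα)
    simpa [hB] using this)
  refine ⟨⟨hS0, hSB⟩, ⟨hP0, hPb⟩, ?_, ?_, ?_⟩
  · intro ω _
    intro t _
    by_cases ht : t ∈ Finset.Icc 1 T
    · exact ⟨(hch ω t ht).1, (hch ω t ht).2.trans hPb⟩
    · rw [hzch ω t ht]; exact ⟨le_rfl, hPbar⟩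
  · intro ω _
    intro t _
    by_cases ht : t ∈ Finset.Icc 1 T
    · exact ⟨(hdis ω t ht).1, (hdis ω t ht).2.trans hPb⟩
    · rw [hzdis ω t ht]; exact ⟨le_rfl, hPbar⟩
  · intro ω _
    intro t _
    by_cases ht : t ≤ T
    · have h := he ω t (by simpa using ht)
      exact ⟨h.1, h.2.trans hSB⟩
    · rw [hze ω t ht]; exact ⟨le_rfl, hB0⟩

lemma SG.zero_mem (hPbar : 0 ≤ Pbar) :
    (⟨0, 0, fun _ _ => 0, fun _ _ => 0, fun _ _ => 0⟩ : StorageDec Ω)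
      ∈ SG.truncSet T ηc ηd αlo αhi Pbar := by
  unfold SG.truncSet feasSet
  refine ⟨?_, ?_⟩ <;> simp [hPbar]

lemma SG.trunc_mem {x : StorageDec Ω} (hx : x ∈ feasSet T ηc ηd αlo αhi Pbar) :
    SG.trunc T x ∈ SG.truncSet T ηc ηd αlo αhi Pbar := by
  obtain ⟨h1, h2, h3, h4, h5, h6, h7⟩ := hx
  refine ⟨⟨?_, ?_, ?_, ?_, ?_, h6, h7⟩, ?_, ?_, ?_⟩
  · intro ω t ht; simp only [SG.trunc, if_pos ht]; exact h1 ω t ht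
  · intro ω t ht; simp only [SG.trunc, if_pos ht]; exact h2 ω t ht
  · intro ω t ht
    have htT : t ≤ T := (Finset.mem_Icc.mp ht).2
    have ht1 : t - 1 ≤ T := le_trans (Nat.sub_le t 1) htT
    simp only [SG.trunc, if_pos ht, if_pos htT, if_pos ht1]
    exact h3 ω t ht
  · intro ω t ht
    have htT : t ≤ T := (Finset.mem_Icc.mp ht).2
    simp only [SG.trunc, if_pos htT]
    exact h4 ω t ht
  · intro ω
    simp only [SG.trunc, if_pos (Nat.zero_le T), if_pos (le_refl T)]
    exact h5 ω
  · intro ω t ht; simp only [SG.trunc, if_neg ht]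
  · intro ω t ht; simp only [SG.trunc, if_neg ht]
  · intro ω t ht; simp only [SG.trunc, if_neg ht]

end Comp

/-! ### Main theorem -/

/-- With a finite duration upper bound `ᾱ_i < ∞` and a power-rating
bound `P_i ≤ P̄` (so each strategy set is compact), the storage-investment game
admits a pure strategy Nash equilibrium. -/
theorem storage_game_nash_exists {I : ℕ} {Ω : Type*} [Fintype Ω] (T : ℕ)
    (ρ : Ω → ℝ) (π0 a : Ω → ℕ → ℝ) (κ : ℝ) (cS cP cch cdis : Fin I → ℝ)
    (ηc ηd αlo αhi : Fin I → ℝ) (Pbar : ℝ)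
    (hρ : ∀ ω, 0 ≤ ρ ω) (ha : ∀ ω t, 0 ≤ a ω t)
    (hηc : ∀ i, ηc i ∈ Set.Ioc (0:ℝ) 1) (hηd : ∀ i, ηd i ∈ Set.Ioc (0:ℝ) 1)
    (hαlo : ∀ i, 0 < αlo i) (hα : ∀ i, αlo i ≤ αhi i) (hPbar : 0 ≤ Pbar) :
    ∃ xstar : Fin I → StorageDec Ω,
      (∀ i, xstar i ∈ feasSet T (ηc i) (ηd i) (αlo i) (αhi i) Pbar) ∧
      ∀ (i : Fin I), ∀ xi ∈ feasSet (Ω := Ω) T (ηc i) (ηd i) (αlo i) (αhi i) Pbar,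
        payoff T ρ π0 a κ cS cP cch cdis i (Function.update xstar i xi)
          ≤ payoff T ρ π0 a κ cS cP cch cdis i xstar := by
  classical
  set K : Fin I → Set (StorageDec Ω) :=
    fun i => SG.truncSet T (ηc i) (ηd i) (αlo i) (αhi i) Pbar with hKdef
  have hKc : ∀ i, IsCompact (K i) := fun i =>
    SG.isCompact_truncSet T (ηc i) (ηd i) (αlo i) (αhi i) Pbar (hαlo i) (hα i) hPbar
  set KK : Set (Fin I → StorageDec Ω) := Set.pi Set.univ K with hKKdef
  have hKKc : IsCompact KK := isCompact_univ_pi hKc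
  have hKKne : KK.Nonempty :=
    ⟨fun _ => ⟨0, 0, fun _ _ => 0, fun _ _ => 0, fun _ _ => 0⟩,
     fun i _ => SG.zero_mem T (ηc i) (ηd i) (αlo i) (αhi i) Pbar hPbar⟩
  have hcont : Continuous (potential T ρ π0 a κ cS cP cch cdis) := by
    unfold potential payoff netDis
    fun_prop
  obtain ⟨xs, hxs, hmax⟩ := hKKc.exists_isMaxOn hKKne hcont.continuousOn
  refine ⟨xs, fun i => (hxs i (Set.mem_univ i)).1, ?_⟩
  intro i xi hxi
  set xi' := SG.trunc T xi with hxi'def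
  have hxi' : xi' ∈ K i := SG.trunc_mem T (ηc i) (ηd i) (αlo i) (αhi i) Pbar hxi
  have hupd : Function.update xs i xi' ∈ KK := by
    intro j _
    by_cases hj : j = i
    · subst hj; simpa [Function.update_self] using hxi'
    · simpa [Function.update_of_ne hj] using hxs j (Set.mem_univ j)
  have hpay : payoff T ρ π0 a κ cS cP cch cdis i (Function.update xs i xi)
      = payoff T ρ π0 a κ cS cP cch cdis i (Function.update xs i xi') := by
    apply SG.payoff_congr
    · intro j; by_cases hj : j = i
      · subst hj; simp only [Function.update_self]; rfl
      · simp only [Function.update_of_ne hj]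
    · intro j; by_cases hj : j = i
      · subst hj; simp only [Function.update_self]; rfl
      · simp only [Function.update_of_ne hj]
    · intro j ω t ht; by_cases hj : j = i
      · subst hj; simp only [Function.update_self, hxi'def, SG.trunc, if_pos ht]
      · simp only [Function.update_of_ne hj]
    · intro j ω t ht; by_cases hj : j = i
      · subst hj; simp only [Function.update_self, hxi'def, SG.trunc, if_pos ht]
      · simp only [Function.update_of_ne hj]
  have hpot := SG.potential_sub_payoff T ρ π0 a κ cS cP cch cdis xs i xi' (xs i)
  rw [Function.update_eq_self] at hpot
  have hle : potential T ρ π0 a κ cS cP cch cdis (Function.update xs i xi')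
      ≤ potential T ρ π0 a κ cS cP cch cdis xs := hmax hupd
  rw [hpay]
  linarith
end

section
/- The potential function Φ(x) = ∑_i f_i(x) + E_ω[∑_t ∑_{i<j} a^ω[t] q_i^ω[t] q_j^ω[t]] can be rewritten as Φ(x) = E_ω[∑_t (π_0^ω[t]·∑_i q_i^ω[t] − (a^ω[t]/2)·(∑_i q_i^ω[t])² − (a^ω[t]/2)·∑_i (q_i^ω[t])²)] − ∑_i (C_i^{inv}(x_i) + C_i^{opr}(x_i)), and consequently Φ is a concave function of x whenever a^ω[t] ≥ 0 for all ω, t. -/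
theorem sq_sum_pairs {I : ℕ} (f : Fin I → ℝ) :
    (∑ i, f i) ^ 2 = (∑ i, f i ^ 2)
      + 2 * ∑ p ∈ Finset.univ.filter (fun p : Fin I × Fin I => p.1 < p.2), f p.1 * f p.2 := by
  have h := Fintype.sum_mul_sum f f
  rw [← sq] at h
  rw [h, ← Finset.sum_product', Finset.univ_product_univ]
  rw [← Finset.sum_filter_add_sum_filter_not Finset.univ (fun p : Fin I × Fin I => p.1 < p.2)]
  have hdiag : ∑ p ∈ Finset.univ.filter (fun p : Fin I × Fin I => ¬ p.1 < p.2), f p.1 * f p.2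
      = (∑ i, f i ^ 2) + ∑ p ∈ Finset.univ.filter (fun p : Fin I × Fin I => p.1 < p.2), f p.1 * f p.2 := by
    rw [← Finset.sum_filter_add_sum_filter_not _ (fun p : Fin I × Fin I => p.1 = p.2)]
    congr 1
    · rw [Finset.filter_filter]
      refine Finset.sum_nbij' (fun p => p.1) (fun i => (i, i)) ?_ ?_ ?_ ?_ ?_
      · intro p hp; simp
      · intro i _; simp
      · intro p hp; simp at hp; exact Prod.ext rfl hp.2
      · intro i _; rfl
      · intro p hp; simp at hp; simp [sq, hp.2]
    · rw [Finset.filter_filter]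
      refine Finset.sum_nbij' (fun p => (p.2, p.1)) (fun p => (p.2, p.1)) ?_ ?_ ?_ ?_ ?_
      · intro p hp; simp at hp ⊢
        exact lt_of_le_of_ne hp.1 (Ne.symm hp.2)
      · intro p hp; simp at hp ⊢
        exact ⟨hp.le, fun h => absurd h.symm (ne_of_lt hp)⟩
      · intro p hp; rfl
      · intro p hp; rfl
      · intro p hp; exact mul_comm _ _
  rw [hdiag]; ring

lemma netDis_pi_combo {I : ℕ} {Ω : Type*} (p q : ℝ) (x y : Fin I → StorageDec Ω)
    (i : Fin I) (ω : Ω) (t : ℕ) :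
    netDis ((p • x + q • y) i) ω t = p * netDis (x i) ω t + q * netDis (y i) ω t := by
  simp [netDis]; ring

/-- The potential can be rewritten as
`Φ(x) = E_ω[∑_t (π₀·∑_i q_i − (a/2)(∑_i q_i)² − (a/2)∑_i q_i²)] − ∑_i (C_i^inv + C_i^opr)`,
and consequently `Φ` is concave whenever `a^ω[t] ≥ 0`. -/
theorem potential_rewrite_and_concave {I : ℕ} {Ω : Type*} [Fintype Ω] (T : ℕ)
    (ρ : Ω → ℝ) (π0 a : Ω → ℕ → ℝ) (κ : ℝ) (cS cP cch cdis : Fin I → ℝ)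
    (hρ : ∀ ω, 0 ≤ ρ ω) (ha : ∀ ω t, 0 ≤ a ω t)
    (hκ : 0 ≤ κ) (hcS : ∀ i, 0 ≤ cS i) (hcP : ∀ i, 0 ≤ cP i)
    (hcch : ∀ i, 0 ≤ cch i) (hcdis : ∀ i, 0 ≤ cdis i) :
    (∀ x : Fin I → StorageDec Ω,
      potential T ρ π0 a κ cS cP cch cdis x =
        (∑ ω, ρ ω * ∑ t ∈ Finset.Icc 1 T,
          (π0 ω t * ∑ i, netDis (x i) ω t
            - (a ω t / 2) * (∑ i, netDis (x i) ω t) ^ 2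
            - (a ω t / 2) * ∑ i, (netDis (x i) ω t) ^ 2))
        - ∑ i, ((κ * cS i * (x i).1 + κ * cP i * (x i).2.1)
            + ∑ ω, ρ ω * ∑ t ∈ Finset.Icc 1 T,
                (cch i * (x i).2.2.1 ω t + cdis i * (x i).2.2.2.1 ω t))) ∧
    ConcaveOn ℝ Set.univ (potential T ρ π0 a κ cS cP cch cdis (I := I) (Ω := Ω)) := by
  have hrw : ∀ x : Fin I → StorageDec Ω,
      potential T ρ π0 a κ cS cP cch cdis x =
        (∑ ω, ρ ω * ∑ t ∈ Finset.Icc 1 T,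
          (π0 ω t * ∑ i, netDis (x i) ω t
            - (a ω t / 2) * (∑ i, netDis (x i) ω t) ^ 2
            - (a ω t / 2) * ∑ i, (netDis (x i) ω t) ^ 2))
        - ∑ i, ((κ * cS i * (x i).1 + κ * cP i * (x i).2.1)
            + ∑ ω, ρ ω * ∑ t ∈ Finset.Icc 1 T,
                (cch i * (x i).2.2.1 ω t + cdis i * (x i).2.2.2.1 ω t)) := by
    intro x
    have h1 : (∑ i, ∑ ω, ρ ω * ∑ t ∈ Finset.Icc 1 T,
          netDis (x i) ω t * (π0 ω t - a ω t * ∑ j, netDis (x j) ω t))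
        + (∑ ω, ρ ω * ∑ t ∈ Finset.Icc 1 T,
            ∑ p ∈ Finset.univ.filter (fun p : Fin I × Fin I => p.1 < p.2),
              a ω t * (netDis (x p.1) ω t * netDis (x p.2) ω t))
        = ∑ ω, ρ ω * ∑ t ∈ Finset.Icc 1 T,
          (π0 ω t * ∑ i, netDis (x i) ω t
            - (a ω t / 2) * (∑ i, netDis (x i) ω t) ^ 2
            - (a ω t / 2) * ∑ i, (netDis (x i) ω t) ^ 2) := by
      rw [Finset.sum_comm, ← Finset.sum_add_distrib]
      refine Finset.sum_congr rfl fun ω _ => ?_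
      rw [← Finset.mul_sum, ← mul_add]
      congr 1
      rw [Finset.sum_comm, ← Finset.sum_add_distrib]
      refine Finset.sum_congr rfl fun t _ => ?_
      rw [← Finset.mul_sum, ← Finset.sum_mul]
      have hp := sq_sum_pairs (fun i => netDis (x i) ω t)
      beta_reduce at hp
      linear_combination (- a ω t / 2) * hp
    have h2 : (∑ i, payoff T ρ π0 a κ cS cP cch cdis i x)
        = (∑ i, ∑ ω, ρ ω * ∑ t ∈ Finset.Icc 1 T,
            netDis (x i) ω t * (π0 ω t - a ω t * ∑ j, netDis (x j) ω t))
          - ∑ i, ((κ * cS i * (x i).1 + κ * cP i * (x i).2.1)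
            + ∑ ω, ρ ω * ∑ t ∈ Finset.Icc 1 T,
                (cch i * (x i).2.2.1 ω t + cdis i * (x i).2.2.2.1 ω t)) := by
      rw [← Finset.sum_sub_distrib]
      exact Finset.sum_congr rfl fun i _ => by rw [payoff]; ring
    rw [potential, h2]
    linear_combination h1
  refine ⟨hrw, convex_univ, fun x _ y _ p q hp hq hpq => ?_⟩
  simp only [smul_eq_mul]
  rw [hrw, hrw, hrw]
  -- cost part is exactly linear
  have hC : (∑ i, ((κ * cS i * (((p • x + q • y)) i).1 + κ * cP i * (((p • x + q • y)) i).2.1)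
        + ∑ ω, ρ ω * ∑ t ∈ Finset.Icc 1 T,
            (cch i * (((p • x + q • y)) i).2.2.1 ω t + cdis i * (((p • x + q • y)) i).2.2.2.1 ω t)))
      = p * (∑ i, ((κ * cS i * (x i).1 + κ * cP i * (x i).2.1)
        + ∑ ω, ρ ω * ∑ t ∈ Finset.Icc 1 T,
            (cch i * (x i).2.2.1 ω t + cdis i * (x i).2.2.2.1 ω t)))
      + q * (∑ i, ((κ * cS i * (y i).1 + κ * cP i * (y i).2.1)
        + ∑ ω, ρ ω * ∑ t ∈ Finset.Icc 1 T,
            (cch i * (y i).2.2.1 ω t + cdis i * (y i).2.2.2.1 ω t))) := by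
    rw [Finset.mul_sum, Finset.mul_sum, ← Finset.sum_add_distrib]
    refine Finset.sum_congr rfl fun i _ => ?_
    have hω : (∑ ω, ρ ω * ∑ t ∈ Finset.Icc 1 T,
          (cch i * (((p • x + q • y)) i).2.2.1 ω t + cdis i * (((p • x + q • y)) i).2.2.2.1 ω t))
        = p * (∑ ω, ρ ω * ∑ t ∈ Finset.Icc 1 T,
            (cch i * (x i).2.2.1 ω t + cdis i * (x i).2.2.2.1 ω t))
        + q * (∑ ω, ρ ω * ∑ t ∈ Finset.Icc 1 T,
            (cch i * (y i).2.2.1 ω t + cdis i * (y i).2.2.2.1 ω t)) := by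
      rw [Finset.mul_sum, Finset.mul_sum, ← Finset.sum_add_distrib]
      refine Finset.sum_congr rfl fun ω _ => ?_
      have hin : (∑ t ∈ Finset.Icc 1 T,
            (cch i * (((p • x + q • y)) i).2.2.1 ω t + cdis i * (((p • x + q • y)) i).2.2.2.1 ω t))
          = p * (∑ t ∈ Finset.Icc 1 T,
              (cch i * (x i).2.2.1 ω t + cdis i * (x i).2.2.2.1 ω t))
          + q * (∑ t ∈ Finset.Icc 1 T,
              (cch i * (y i).2.2.1 ω t + cdis i * (y i).2.2.2.1 ω t)) := by
        rw [Finset.mul_sum, Finset.mul_sum, ← Finset.sum_add_distrib]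
        refine Finset.sum_congr rfl fun t _ => ?_
        simp; ring
      rw [hin]; ring
    have hfst : (((p • x + q • y)) i).1 = p * (x i).1 + q * (y i).1 := by simp
    have hsnd : (((p • x + q • y)) i).2.1 = p * (x i).2.1 + q * (y i).2.1 := by simp
    rw [hω, hfst, hsnd]; ring
  rw [hC]
  -- main part: termwise concavity
  have hM : p * (∑ ω, ρ ω * ∑ t ∈ Finset.Icc 1 T,
        (π0 ω t * ∑ i, netDis (x i) ω t
          - (a ω t / 2) * (∑ i, netDis (x i) ω t) ^ 2
          - (a ω t / 2) * ∑ i, (netDis (x i) ω t) ^ 2))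
      + q * (∑ ω, ρ ω * ∑ t ∈ Finset.Icc 1 T,
        (π0 ω t * ∑ i, netDis (y i) ω t
          - (a ω t / 2) * (∑ i, netDis (y i) ω t) ^ 2
          - (a ω t / 2) * ∑ i, (netDis (y i) ω t) ^ 2))
      ≤ ∑ ω, ρ ω * ∑ t ∈ Finset.Icc 1 T,
        (π0 ω t * ∑ i, netDis (((p • x + q • y)) i) ω t
          - (a ω t / 2) * (∑ i, netDis (((p • x + q • y)) i) ω t) ^ 2
          - (a ω t / 2) * ∑ i, (netDis (((p • x + q • y)) i) ω t) ^ 2) := by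
    rw [Finset.mul_sum, Finset.mul_sum, ← Finset.sum_add_distrib]
    refine Finset.sum_le_sum fun ω _ => ?_
    have hinner : p * (∑ t ∈ Finset.Icc 1 T,
          (π0 ω t * ∑ i, netDis (x i) ω t
            - (a ω t / 2) * (∑ i, netDis (x i) ω t) ^ 2
            - (a ω t / 2) * ∑ i, (netDis (x i) ω t) ^ 2))
        + q * (∑ t ∈ Finset.Icc 1 T,
          (π0 ω t * ∑ i, netDis (y i) ω t
            - (a ω t / 2) * (∑ i, netDis (y i) ω t) ^ 2
            - (a ω t / 2) * ∑ i, (netDis (y i) ω t) ^ 2))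
        ≤ ∑ t ∈ Finset.Icc 1 T,
          (π0 ω t * ∑ i, netDis (((p • x + q • y)) i) ω t
            - (a ω t / 2) * (∑ i, netDis (((p • x + q • y)) i) ω t) ^ 2
            - (a ω t / 2) * ∑ i, (netDis (((p • x + q • y)) i) ω t) ^ 2) := by
      rw [Finset.mul_sum, Finset.mul_sum, ← Finset.sum_add_distrib]
      refine Finset.sum_le_sum fun t _ => ?_
      have hS : (∑ i, netDis (((p • x + q • y)) i) ω t)
          = p * (∑ i, netDis (x i) ω t) + q * (∑ i, netDis (y i) ω t) := by
        rw [Finset.mul_sum, Finset.mul_sum, ← Finset.sum_add_distrib]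
        exact Finset.sum_congr rfl fun i _ => netDis_pi_combo p q x y i ω t
      have hQ : (∑ i, (netDis (((p • x + q • y)) i) ω t) ^ 2)
          ≤ p * (∑ i, (netDis (x i) ω t) ^ 2) + q * (∑ i, (netDis (y i) ω t) ^ 2) := by
        rw [Finset.mul_sum, Finset.mul_sum, ← Finset.sum_add_distrib]
        refine Finset.sum_le_sum fun i _ => ?_
        rw [netDis_pi_combo]
        nlinarith [sq_nonneg (netDis (x i) ω t - netDis (y i) ω t), mul_nonneg hp hq]
      have h2 : (p * (∑ i, netDis (x i) ω t) + q * (∑ i, netDis (y i) ω t)) ^ 2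
          ≤ p * (∑ i, netDis (x i) ω t) ^ 2 + q * (∑ i, netDis (y i) ω t) ^ 2 := by
        nlinarith [sq_nonneg ((∑ i, netDis (x i) ω t) - (∑ i, netDis (y i) ω t)),
          mul_nonneg hp hq]
      have ha2 : (0:ℝ) ≤ a ω t / 2 := by linarith [ha ω t]
      rw [hS]
      nlinarith [mul_le_mul_of_nonneg_left hQ ha2, mul_le_mul_of_nonneg_left h2 ha2]
    calc p * (ρ ω * _) + q * (ρ ω * _) = ρ ω * (p * _ + q * _) := by ring
      _ ≤ ρ ω * _ := mul_le_mul_of_nonneg_left hinner (hρ ω)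
  linarith [hM]
end
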